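/- arXiv:2104.09140 — 3 statements merged into one kernel-verified Lean document; each statement's English description precedes it below -/
import Mathlib

section
/- For every positive integer k, for complex parameters with α ≠ 1 and δ not a nonpositive integer, and for complex x, y for which all the series below converge absolutely, H1(α,β,γ+k;δ;x,y) = H1(α,β,γ;δ;x,y) + (βy/(α−1))·Σ_{r=1}^{k} H1(α−1,β+1,γ+r;δ;x,y). -/
noncomputable section

/-- Pochhammer symbol `(μ)_j` for an integer index `j`: for `j = k ≥ 0` it is
`μ(μ+1)⋯(μ+k-1)`, and for `j = -k < 0` it is `(-1)^k / ((1-μ)_k)`. -/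
def poch (μ : ℂ) (j : ℤ) : ℂ :=
  if 0 ≤ j then ∏ i ∈ Finset.range j.toNat, (μ + (i : ℂ))
  else (-1) ^ (-j).toNat / ∏ i ∈ Finset.range (-j).toNat, (1 - μ + (i : ℂ))

/-- General term of the Horn series `H1`. -/
def H1term (α β γ δ x y : ℂ) (p : ℕ × ℕ) : ℂ :=
  poch α ((p.1 : ℤ) - (p.2 : ℤ)) * poch β ((p.1 : ℤ) + (p.2 : ℤ)) * poch γ (p.2 : ℤ) /
    (poch δ (p.1 : ℤ) * (p.1.factorial : ℂ) * (p.2.factorial : ℂ)) * x ^ p.1 * y ^ p.2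

/-- The Horn hypergeometric function `H1`. -/
def H1 (α β γ δ x y : ℂ) : ℂ := ∑' p : ℕ × ℕ, H1term α β γ δ x y p

/-- General term of the Horn series `H2`. -/
def H2term (α β γ δ ε x y : ℂ) (p : ℕ × ℕ) : ℂ :=
  poch α ((p.1 : ℤ) - (p.2 : ℤ)) * poch β (p.1 : ℤ) * poch γ (p.2 : ℤ) * poch δ (p.2 : ℤ) /
    (poch ε (p.1 : ℤ) * (p.1.factorial : ℂ) * (p.2.factorial : ℂ)) * x ^ p.1 * y ^ p.2

/-- The Horn hypergeometric function `H2`. -/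
def H2 (α β γ δ ε x y : ℂ) : ℂ := ∑' p : ℕ × ℕ, H2term α β γ δ ε x y p

/-- General term of the Horn series `H3`. -/
def H3term (α β γ x y : ℂ) (p : ℕ × ℕ) : ℂ :=
  poch α (2 * (p.1 : ℤ) + (p.2 : ℤ)) * poch β (p.2 : ℤ) /
    (poch γ ((p.1 : ℤ) + (p.2 : ℤ)) * (p.1.factorial : ℂ) * (p.2.factorial : ℂ)) *
    x ^ p.1 * y ^ p.2

/-- The Horn hypergeometric function `H3`. -/
def H3 (α β γ x y : ℂ) : ℂ := ∑' p : ℕ × ℕ, H3term α β γ x y p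

/-- General term of the Horn series `H5`. -/
def H5term (α β γ x y : ℂ) (p : ℕ × ℕ) : ℂ :=
  poch α (2 * (p.1 : ℤ) + (p.2 : ℤ)) * poch β ((p.2 : ℤ) - (p.1 : ℤ)) /
    (poch γ (p.2 : ℤ) * (p.1.factorial : ℂ) * (p.2.factorial : ℂ)) * x ^ p.1 * y ^ p.2

/-- The Horn hypergeometric function `H5`. -/
def H5 (α β γ x y : ℂ) : ℂ := ∑' p : ℕ × ℕ, H5term α β γ x y p

/-- General term of the Horn series `H6`. -/
def H6term (α β γ x y : ℂ) (p : ℕ × ℕ) : ℂ :=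
  poch α (2 * (p.1 : ℤ) - (p.2 : ℤ)) * poch β ((p.2 : ℤ) - (p.1 : ℤ)) * poch γ (p.2 : ℤ) /
    ((p.1.factorial : ℂ) * (p.2.factorial : ℂ)) * x ^ p.1 * y ^ p.2

/-- The Horn hypergeometric function `H6`. -/
def H6 (α β γ x y : ℂ) : ℂ := ∑' p : ℕ × ℕ, H6term α β γ x y p

/-- General term of the Horn series `H7`. -/
def H7term (α β γ δ x y : ℂ) (p : ℕ × ℕ) : ℂ :=
  poch α (2 * (p.1 : ℤ) - (p.2 : ℤ)) * poch β (p.2 : ℤ) * poch γ (p.2 : ℤ) /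
    (poch δ (p.1 : ℤ) * (p.1.factorial : ℂ) * (p.2.factorial : ℂ)) * x ^ p.1 * y ^ p.2

/-- The Horn hypergeometric function `H7`. -/
def H7 (α β γ δ x y : ℂ) : ℂ := ∑' p : ℕ × ℕ, H7term α β γ δ x y p

lemma poch_nat (μ : ℂ) (n : ℕ) : poch μ (n : ℤ) = ∏ i ∈ Finset.range n, (μ + (i : ℂ)) := by
  simp [poch]

lemma poch_neg (μ : ℂ) (k : ℕ) (hk : 0 < k) :
    poch μ (-(k : ℤ)) = (-1) ^ k / ∏ i ∈ Finset.range k, (1 - μ + (i : ℂ)) := by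
  have h1 : ¬ (0 ≤ -(k : ℤ)) := by omega
  have h2 : (-(-(k : ℤ))).toNat = k := by omega
  simp only [poch, h1, if_false, h2]

-- (μ)_{n+1} = μ * (μ+1)_n

lemma poch_nat_succ (μ : ℂ) (n : ℕ) :
    poch μ ((n : ℤ) + 1) = μ * poch (μ + 1) (n : ℤ) := by
  have : ((n : ℤ) + 1) = ((n + 1 : ℕ) : ℤ) := by push_cast; ring
  rw [this, poch_nat, poch_nat, Finset.prod_range_succ']
  simp only [Nat.cast_zero, add_zero]
  rw [mul_comm]
  congr 1
  apply Finset.prod_congr rfl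
  intro i _
  push_cast; ring

lemma poch_nat_top (μ : ℂ) (n : ℕ) :
    poch μ ((n : ℤ) + 1) = poch μ (n : ℤ) * (μ + n) := by
  have : ((n : ℤ) + 1) = ((n + 1 : ℕ) : ℤ) := by push_cast; ring
  rw [this, poch_nat, poch_nat, Finset.prod_range_succ]

lemma poch_shift {α : ℂ} (hα : α ≠ 1) (j : ℤ) :
    poch (α - 1) j = (α - 1) * poch α (j - 1) := by
  have hα' : α - 1 ≠ 0 := sub_ne_zero.mpr hα
  have h1α : 1 - α ≠ 0 := by intro h; apply hα; linear_combination -h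
  rcases lt_trichotomy j 0 with hj | hj | hj
  · -- j ≤ -1
    obtain ⟨k, hk, rfl⟩ : ∃ k : ℕ, 0 < k ∧ j = -(k : ℤ) :=
      ⟨(-j).toNat, by omega, by omega⟩
    have e1 : -(k : ℤ) - 1 = -((k+1 : ℕ) : ℤ) := by push_cast; ring
    rw [e1, poch_neg _ _ hk, poch_neg _ _ (Nat.succ_pos k), Finset.prod_range_succ']
    have e3 : ∀ i ∈ Finset.range k, (1 - α + ((i+1 : ℕ) : ℂ)) = (1 - (α-1) + (i:ℂ)) := by
      intro i _; push_cast; ring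
    rw [Finset.prod_congr rfl e3]
    set P := ∏ i ∈ Finset.range k, (1 - (α-1) + (i:ℂ)) with hP
    simp only [Nat.cast_zero, add_zero]
    by_cases hP0 : P = 0
    · simp [hP0]
    · field_simp
      simp only [Nat.succ_eq_add_one, pow_succ]
      ring
  · subst hj
    have e1 : (0 : ℤ) - 1 = -((1 : ℕ) : ℤ) := by norm_num
    have e0 : (0 : ℤ) = ((0 : ℕ) : ℤ) := rfl
    rw [e1, poch_neg _ _ one_pos, e0, poch_nat]
    simp only [Finset.range_zero, Finset.prod_empty, Finset.prod_range_one,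
      Nat.cast_zero, add_zero, pow_one]
    field_simp
    ring
  · -- j ≥ 1
    obtain ⟨n, rfl⟩ : ∃ n : ℕ, j = (n : ℤ) + 1 := ⟨(j-1).toNat, by omega⟩
    rw [add_sub_cancel_right, poch_nat_succ]
    congr 2
    ring

lemma poch_delta_ne (δ : ℂ) (hδ : ∀ n : ℕ, δ ≠ -(n : ℂ)) (m : ℕ) :
    poch δ (m : ℤ) ≠ 0 := by
  rw [poch_nat]
  apply Finset.prod_ne_zero_iff.mpr
  intro i _
  intro h
  exact hδ i (by linear_combination h)

lemma term_diff {α β γ δ x y : ℂ} (hα : α ≠ 1) (hδ : ∀ n : ℕ, δ ≠ -(n : ℂ)) (m n : ℕ) :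
    H1term α β (γ + 1) δ x y (m, n + 1) - H1term α β γ δ x y (m, n + 1)
      = β * y / (α - 1) * H1term (α - 1) (β + 1) (γ + 1) δ x y (m, n) := by
  have hα' : α - 1 ≠ 0 := sub_ne_zero.mpr hα
  have hδm := poch_delta_ne δ hδ m
  have hm : (m.factorial : ℂ) ≠ 0 := Nat.cast_ne_zero.mpr m.factorial_ne_zero
  have hn : (n.factorial : ℂ) ≠ 0 := Nat.cast_ne_zero.mpr n.factorial_ne_zero
  simp only [H1term]
  have eα : poch α ((m : ℤ) - ((n : ℕ) + 1 : ℕ)) = poch (α - 1) ((m : ℤ) - n) / (α - 1) := by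
    rw [poch_shift hα ((m : ℤ) - n)]
    have : ((m : ℤ)) - ((n : ℕ) + 1 : ℕ) = (m : ℤ) - n - 1 := by push_cast; ring
    rw [this]
    field_simp
  have eβ : poch β ((m : ℤ) + ((n + 1 : ℕ) : ℤ)) = β * poch (β + 1) ((m : ℤ) + n) := by
    have e : (m : ℤ) + ((n + 1 : ℕ) : ℤ) = ((m + n : ℕ) : ℤ) + 1 := by push_cast; ring
    have e2 : (m : ℤ) + (n : ℤ) = ((m + n : ℕ) : ℤ) := by push_cast; ring
    rw [e, e2, poch_nat_succ]
  have eγ : poch (γ + 1) (((n + 1 : ℕ)) : ℤ) - poch γ (((n + 1 : ℕ)) : ℤ)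
      = ((n : ℂ) + 1) * poch (γ + 1) (n : ℤ) := by
    have e : ((n + 1 : ℕ) : ℤ) = (n : ℤ) + 1 := by push_cast; ring
    rw [e, poch_nat_top, poch_nat_succ]
    ring
  have eγ' : poch (γ + 1) (((n + 1 : ℕ)) : ℤ)
      = poch γ (((n + 1 : ℕ)) : ℤ) + ((n : ℂ) + 1) * poch (γ + 1) (n : ℤ) := by
    linear_combination eγ
  have hn1 : ((n : ℂ) + 1) ≠ 0 := by
    have := Nat.cast_ne_zero (R := ℂ).mpr (Nat.succ_ne_zero n)
    push_cast at this
    exact this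
  rw [eα, eβ, eγ', Nat.factorial_succ, pow_succ]
  push_cast
  field_simp [hδm, hm, hn, hn1, hα']
  ring

lemma term_diff_zero (α β γ δ x y : ℂ) (m : ℕ) :
    H1term α β (γ + 1) δ x y (m, 0) = H1term α β γ δ x y (m, 0) := by
  simp [H1term, poch]

lemma shift_inj : Function.Injective (fun q : ℕ × ℕ => (q.1, q.2 + 1)) := by
  intro a b h
  simp only [Prod.mk.injEq] at h
  exact Prod.ext h.1 (by omega)

lemma shift_range (p : ℕ × ℕ) (hp : p ∉ Set.range (fun q : ℕ × ℕ => (q.1, q.2 + 1))) :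
    p.2 = 0 := by
  by_contra h
  exact hp ⟨(p.1, p.2 - 1), by simp [Prod.ext_iff]; omega⟩

lemma step {α β γ δ x y : ℂ} (hα : α ≠ 1) (hδ : ∀ n : ℕ, δ ≠ -(n : ℂ))
    (h0 : Summable fun p : ℕ × ℕ => ‖H1term α β γ δ x y p‖)
    (hc : Summable fun p : ℕ × ℕ => ‖H1term (α - 1) (β + 1) (γ + 1) δ x y p‖) :
    (Summable fun p : ℕ × ℕ => ‖H1term α β (γ + 1) δ x y p‖) ∧
    H1 α β (γ + 1) δ x y
      = H1 α β γ δ x y + β * y / (α - 1) * H1 (α - 1) (β + 1) (γ + 1) δ x y := by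
  set c := β * y / (α - 1) with hcdef
  set d : ℕ × ℕ → ℂ := fun p => H1term α β (γ + 1) δ x y p - H1term α β γ δ x y p with hd
  have hde : ∀ q : ℕ × ℕ, d (q.1, q.2 + 1) = c * H1term (α - 1) (β + 1) (γ + 1) δ x y q := by
    intro q
    exact term_diff hα hδ q.1 q.2
  have hd0 : ∀ p ∉ Set.range (fun q : ℕ × ℕ => (q.1, q.2 + 1)), d p = 0 := by
    intro p hp
    have h2 := shift_range p hp
    have : p = (p.1, 0) := by rw [← h2]
    rw [this]
    simp only [hd, term_diff_zero, sub_self]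
  have hgsum : Summable fun q : ℕ × ℕ => c * H1term (α - 1) (β + 1) (γ + 1) δ x y q :=
    (hc.of_norm).mul_left c
  have hdsum : Summable d := by
    rw [← Function.Injective.summable_iff shift_inj hd0]
    exact hgsum.congr fun q => (hde q).symm
  have htsum : ∑' p, d p = c * H1 (α - 1) (β + 1) (γ + 1) δ x y := by
    rw [← Function.Injective.tsum_eq shift_inj (Function.support_subset_iff'.mpr hd0)]
    rw [tsum_congr hde, tsum_mul_left]
    rfl
  have hdnorm : Summable fun p => ‖d p‖ := by
    rw [← Function.Injective.summable_iff shift_inj (by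
      intro p hp; rw [hd0 p hp]; simp)]
    apply Summable.congr (hc.mul_left ‖c‖)
    intro q
    simp only [Function.comp]
    rw [hde q, norm_mul]
  constructor
  · apply Summable.of_nonneg_of_le (fun p => norm_nonneg _)
      (fun p => ?_) (h0.add hdnorm)
    have : H1term α β (γ + 1) δ x y p = H1term α β γ δ x y p + d p := by simp [hd]
    rw [this]
    exact norm_add_le _ _
  · have : H1 α β (γ + 1) δ x y = ∑' p, (H1term α β γ δ x y p + d p) := by
      apply tsum_congr; intro p; simp [hd]
    rw [this, Summable.tsum_add h0.of_norm hdsum, htsum]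
    rfl

lemma aux {α β γ δ x y : ℂ} (hα : α ≠ 1) (hδ : ∀ n : ℕ, δ ≠ -(n : ℂ))
    (hs0 : Summable fun p : ℕ × ℕ => ‖H1term α β γ δ x y p‖) :
    ∀ k : ℕ, (∀ r ∈ Finset.Icc 1 k,
        Summable fun p : ℕ × ℕ => ‖H1term (α - 1) (β + 1) (γ + (r : ℂ)) δ x y p‖) →
      (Summable fun p : ℕ × ℕ => ‖H1term α β (γ + (k : ℂ)) δ x y p‖) ∧
      H1 α β (γ + (k : ℂ)) δ x y
        = H1 α β γ δ x y
          + β * y / (α - 1) * ∑ r ∈ Finset.Icc 1 k, H1 (α - 1) (β + 1) (γ + (r : ℂ)) δ x y := by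
  intro k
  induction k with
  | zero =>
    intro _
    simp only [Nat.cast_zero, add_zero]
    refine ⟨hs0, ?_⟩
    simp
  | succ k ih =>
    intro hs1
    have ih' := ih (fun r hr => hs1 r (Finset.Icc_subset_Icc_right (by omega) hr))
    have hcast : γ + ((k + 1 : ℕ) : ℂ) = (γ + (k : ℂ)) + 1 := by push_cast; ring
    have hst := step hα hδ ih'.1
      (by rw [← hcast]; exact hs1 (k + 1) (by simp))
    rw [← hcast] at hst
    refine ⟨hst.1, ?_⟩
    rw [hst.2, ih'.2, Finset.sum_Icc_succ_top (by omega : 1 ≤ k + 1)]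
    ring

/-- Recursion formula for `H1` in the third parameter `γ` (paper Eq. (2.9)). -/
theorem H1_recursion_gamma (k : ℕ) (hk : 0 < k) (α β γ δ x y : ℂ)
    (hα : α ≠ 1)
    (hδ : ∀ n : ℕ, δ ≠ -(n : ℂ))
    (hs0 : Summable fun p : ℕ × ℕ => ‖H1term α β γ δ x y p‖)
    (hsk : Summable fun p : ℕ × ℕ => ‖H1term α β (γ + (k : ℂ)) δ x y p‖)
    (hs1 : ∀ r ∈ Finset.Icc 1 k,
      Summable fun p : ℕ × ℕ => ‖H1term (α - 1) (β + 1) (γ + (r : ℂ)) δ x y p‖) :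
    H1 α β (γ + (k : ℂ)) δ x y =
      H1 α β γ δ x y
        + β * y / (α - 1) * ∑ r ∈ Finset.Icc 1 k, H1 (α - 1) (β + 1) (γ + (r : ℂ)) δ x y := by
  exact (aux hα hδ hs0 k hs1).2

end
end

section
/- For every natural number s, for complex parameters with γ not a nonpositive integer and x, y in the interior of the domain of absolute convergence, the Horn function H3 satisfies ∂^s/∂x^s H3(α,β;γ;x,y) = [(α)_{2s} / (γ)_s] · H3(α+2s, β; γ+s; x, y) and ∂^s/∂y^s H3(α,β;γ;x,y) = [(α)_s (β)_s / (γ)_s] · H3(α+s, β+s; γ+s; x, y). -/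
noncomputable section

def pn (μ : ℂ) (k : ℕ) : ℂ := ∏ i ∈ Finset.range k, (μ + (i : ℂ))

lemma pn_succ_left (μ : ℂ) (k : ℕ) : pn μ (k+1) = μ * pn (μ+1) k := by
  rw [pn, Finset.prod_range_succ', pn]
  rw [Finset.prod_congr rfl (fun i _ => show μ + ((i+1 : ℕ) : ℂ) = (μ+1) + i by push_cast; ring)]
  push_cast
  ring

lemma pn_ne_zero (μ : ℂ) (k : ℕ) (h : ∀ i : ℕ, μ + (i:ℂ) ≠ 0) : pn μ k ≠ 0 :=
  Finset.prod_ne_zero_iff.2 fun i _ => h i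

lemma poch_nat_s13 (μ : ℂ) (k : ℕ) : poch μ (k : ℤ) = pn μ k := by
  simp [poch, pn]

/-- Coefficient of the `H3` series. -/
def cN (α β γ : ℂ) (p : ℕ × ℕ) : ℂ :=
  pn α (2*p.1+p.2) * pn β p.2 / (pn γ (p.1+p.2) * (p.1.factorial : ℂ) * (p.2.factorial : ℂ))

lemma H3term_eq (α β γ u v : ℂ) (p : ℕ × ℕ) :
    H3term α β γ u v p = cN α β γ p * u ^ p.1 * v ^ p.2 := by
  have c1 : (2*(p.1:ℤ) + (p.2:ℤ)) = ((2*p.1 + p.2 : ℕ) : ℤ) := by push_cast; ring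
  have c2 : ((p.1:ℤ) + (p.2:ℤ)) = ((p.1 + p.2 : ℕ) : ℤ) := by push_cast; ring
  rw [H3term, cN, c1, c2, show ((p.2:ℤ)) = ((p.2:ℕ):ℤ) from rfl, poch_nat_s13, poch_nat_s13, poch_nat_s13]

lemma H3term_norm (α β γ : ℂ) {X Y : ℝ} (hX : 0 ≤ X) (hY : 0 ≤ Y) (p : ℕ × ℕ) :
    ‖H3term α β γ (X:ℂ) (Y:ℂ) p‖ = ‖cN α β γ p‖ * X ^ p.1 * Y ^ p.2 := by
  rw [H3term_eq, norm_mul, norm_mul, norm_pow, norm_pow, Complex.norm_real, Complex.norm_real,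
    Real.norm_of_nonneg hX, Real.norm_of_nonneg hY]

lemma Ix (α β γ : ℂ) (hγ : ∀ i : ℕ, γ + (i:ℂ) ≠ 0) (m n : ℕ) :
    cN α β γ (m+1, n) * ((m : ℂ)+1) = α*(α+1)/γ * cN (α+2) β (γ+1) (m, n) := by
  have hg0 : γ ≠ 0 := by simpa using hγ 0
  have hG : pn (γ+1) (m+n) ≠ 0 := by
    refine pn_ne_zero _ _ fun i => ?_
    have h := hγ (i+1)
    push_cast at h ⊢
    intro hcon; exact h (by linear_combination hcon)
  have hm : ((m.factorial : ℂ)) ≠ 0 := Nat.cast_ne_zero.2 m.factorial_ne_zero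
  have hn : ((n.factorial : ℂ)) ≠ 0 := Nat.cast_ne_zero.2 n.factorial_ne_zero
  have hm1 : ((m:ℂ)+1) ≠ 0 := by
    have : (((m+1:ℕ)) : ℂ) ≠ 0 := Nat.cast_ne_zero.2 (Nat.succ_ne_zero m)
    push_cast at this; exact this
  simp only [cN]
  have e1 : 2*(m+1)+n = (2*m+n)+1+1 := by ring
  have e2 : (m+1)+n = (m+n)+1 := by ring
  rw [e1, e2, pn_succ_left, pn_succ_left, pn_succ_left (μ := γ),
    show α+1+1 = α+2 from by ring, Nat.factorial_succ]
  push_cast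
  field_simp

lemma Iy (α β γ : ℂ) (hγ : ∀ i : ℕ, γ + (i:ℂ) ≠ 0) (m n : ℕ) :
    cN α β γ (m, n+1) * ((n : ℂ)+1) = α*β/γ * cN (α+1) (β+1) (γ+1) (m, n) := by
  have hg0 : γ ≠ 0 := by simpa using hγ 0
  have hG : pn (γ+1) (m+n) ≠ 0 := by
    refine pn_ne_zero _ _ fun i => ?_
    have h := hγ (i+1)
    push_cast at h ⊢
    intro hcon; exact h (by linear_combination hcon)
  have hm : ((m.factorial : ℂ)) ≠ 0 := Nat.cast_ne_zero.2 m.factorial_ne_zero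
  have hn : ((n.factorial : ℂ)) ≠ 0 := Nat.cast_ne_zero.2 n.factorial_ne_zero
  have hn1 : ((n:ℂ)+1) ≠ 0 := by
    have : (((n+1:ℕ)) : ℂ) ≠ 0 := Nat.cast_ne_zero.2 (Nat.succ_ne_zero n)
    push_cast at this; exact this
  simp only [cN]
  have e1 : 2*m+(n+1) = (2*m+n)+1 := by ring
  have e2 : m+(n+1) = (m+n)+1 := by ring
  rw [e1, e2, pn_succ_left, pn_succ_left (μ := β), pn_succ_left (μ := γ), Nat.factorial_succ]
  push_cast
  field_simp
lemma exists_geom_bound {q : ℝ} (h0 : 0 ≤ q) (h1 : q < 1) :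
    ∃ C : ℝ, 0 < C ∧ ∀ m : ℕ, ((m:ℝ)+1) * q ^ m ≤ C := by
  have hs1 : Summable fun m : ℕ => ((m:ℝ))^1 * q ^ m :=
    summable_pow_mul_geometric_of_norm_lt_one 1 (by rwa [Real.norm_of_nonneg h0])
  have hs2 : Summable fun m : ℕ => q ^ m := summable_geometric_of_lt_one h0 h1
  have hs : Summable fun m : ℕ => ((m:ℝ)+1) * q ^ m := by
    refine (hs1.add hs2).congr fun m => ?_
    ring
  refine ⟨∑' m : ℕ, ((m:ℝ)+1) * q ^ m, ?_, fun m => ?_⟩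
  · have h00 : (0:ℝ) < ((0:ℕ):ℝ)+1 := by norm_num
    calc (0:ℝ) < (((0:ℕ):ℝ)+1) * q ^ 0 := by norm_num
      _ ≤ _ := Summable.le_tsum hs 0 fun j _ => by positivity
  · exact Summable.le_tsum hs m fun j _ => by positivity

lemma tsum_shift1 (d : ℕ × ℕ → ℂ) (h0 : ∀ n, d (0, n) = 0) :
    ∑' p : ℕ × ℕ, d (p.1+1, p.2) = ∑' p : ℕ × ℕ, d p := by
  apply Function.Injective.tsum_eq (g := fun p : ℕ × ℕ => (p.1+1, p.2))
  · intro a b h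
    simp only [Prod.mk.injEq] at h
    exact Prod.ext (by omega) h.2
  · intro p hp
    rcases p with ⟨m, n⟩
    match m with
    | 0 => exact absurd (h0 n) hp
    | Nat.succ k => exact ⟨(k, n), rfl⟩

/-- Core analytic lemma: term-by-term differentiation of `∑ c p * t ^ p.1` inside the
disk of summability. -/
lemma key_hasDerivAt {c : ℕ × ℕ → ℂ} {R r : ℝ} (h0 : 0 < r) (hrR : r < R)
    (hsum : Summable fun p => ‖c p‖ * R ^ p.1) {t : ℂ} (ht : ‖t‖ < r) :
    HasDerivAt (fun u => ∑' p : ℕ × ℕ, c p * u ^ p.1)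
      (∑' p : ℕ × ℕ, c p * p.1 * t ^ (p.1 - 1)) t := by
  have hR : 0 < R := h0.trans hrR
  set q : ℝ := r / R with hqdef
  have hq0 : 0 ≤ q := by positivity
  have hq1 : q < 1 := (div_lt_one hR).2 hrR
  have hrqR : r = q * R := by rw [hqdef, div_mul_cancel₀ _ hR.ne']
  obtain ⟨C, hC0, hC⟩ := exists_geom_bound hq0 hq1
  set u : ℕ × ℕ → ℝ := fun p => ‖c p‖ * ((p.1 : ℝ) * r ^ (p.1 - 1)) with hu
  have hub : ∀ p : ℕ × ℕ, u p ≤ C / R * (‖c p‖ * R ^ p.1) := by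
    intro p
    rcases hp : p.1 with - | k
    · have hz : u p = 0 := by simp [hu, hp]
      rw [hz]
      positivity
    · simp only [hu, hp]
      have key : ((k:ℝ)+1) * r ^ k ≤ C / R * R ^ (k+1) := by
        rw [hrqR, mul_pow]
        calc ((k:ℝ)+1) * (q ^ k * R ^ k) = (((k:ℝ)+1) * q ^ k) * R ^ k := by ring
          _ ≤ C * R ^ k := by
              have := hC k
              have hRk : (0:ℝ) ≤ R ^ k := by positivity
              exact mul_le_mul_of_nonneg_right this hRk
          _ = C / R * R ^ (k+1) := by field_simp; ring
      calc ‖c p‖ * (((k+1:ℕ):ℝ) * r ^ (k+1-1)) = ‖c p‖ * (((k:ℝ)+1) * r ^ k) := by push_cast; ring_nf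
        _ ≤ ‖c p‖ * (C / R * R ^ (k+1)) :=
            mul_le_mul_of_nonneg_left key (norm_nonneg (c p))
        _ = C / R * (‖c p‖ * R ^ (k+1)) := by ring
  have husum : Summable u := by
    refine Summable.of_nonneg_of_le (fun p => by positivity) hub ?_
    simpa using hsum.mul_left (C / R)
  have hder : ∀ (p : ℕ × ℕ) (z : ℂ), z ∈ Metric.ball (0:ℂ) r →
      HasDerivAt (fun w => c p * w ^ p.1) (c p * p.1 * z ^ (p.1 - 1)) z := by
    intro p z _
    have h := (hasDerivAt_pow p.1 z).const_mul (c p)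
    simpa [mul_assoc] using h
  have hbound : ∀ (p : ℕ × ℕ) (z : ℂ), z ∈ Metric.ball (0:ℂ) r →
      ‖c p * p.1 * z ^ (p.1 - 1)‖ ≤ u p := by
    intro p z hz
    rw [norm_mul, norm_mul, Complex.norm_natCast, norm_pow]
    have hzr : ‖z‖ ≤ r := le_of_lt (mem_ball_zero_iff.1 hz)
    have hle : ‖z‖ ^ (p.1 - 1) ≤ r ^ (p.1 - 1) := pow_le_pow_left₀ (norm_nonneg z) hzr _
    calc ‖c p‖ * (p.1:ℝ) * ‖z‖ ^ (p.1-1) ≤ ‖c p‖ * (p.1:ℝ) * r ^ (p.1-1) := by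
          have h1 : (0:ℝ) ≤ ‖c p‖ * (p.1:ℝ) := by positivity
          exact mul_le_mul_of_nonneg_left hle h1
      _ = ‖c p‖ * ((p.1:ℝ) * r ^ (p.1-1)) := by ring
  have h00 : Summable fun p : ℕ × ℕ => c p * (0:ℂ) ^ p.1 := by
    refine Summable.of_norm_bounded hsum fun p => ?_
    rw [norm_mul, norm_pow, norm_zero]
    rcases hp : p.1 with - | k
    · simp
    · have h1 : (0:ℝ) ^ (k+1) = 0 := by simp
      rw [h1]
      have h2 : (0:ℝ) ≤ ‖c p‖ * R ^ (k+1) := by positivity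
      simpa using h2
  exact hasDerivAt_tsum_of_isPreconnected husum Metric.isOpen_ball
    (convex_ball (0:ℂ) r).isPreconnected hder hbound (Metric.mem_ball_self h0) h00
    (mem_ball_zero_iff.2 ht)
lemma stepX (α β γ : ℂ) (hγ : ∀ i : ℕ, γ + (i:ℂ) ≠ 0) (y : ℂ) {X Y : ℝ} (hX : 0 < X)
    (hyY : ‖y‖ ≤ Y) (hsum : Summable fun p => ‖H3term α β γ (X:ℂ) (Y:ℂ) p‖)
    {u : ℂ} (hu : ‖u‖ < X) :
    HasDerivAt (fun z => H3 α β γ z y) (α*(α+1)/γ * H3 (α+2) β (γ+1) u y) u := by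
  have hY0 : 0 ≤ Y := le_trans (norm_nonneg y) hyY
  set c : ℕ × ℕ → ℂ := fun p => cN α β γ p * y ^ p.2 with hc
  have hfun : (fun z => H3 α β γ z y) = fun z => ∑' p : ℕ × ℕ, c p * z ^ p.1 := by
    funext z
    exact tsum_congr fun p => by rw [H3term_eq, hc]; ring
  have hcsum : Summable fun p : ℕ × ℕ => ‖c p‖ * X ^ p.1 := by
    refine Summable.of_nonneg_of_le (fun p => by positivity) (fun p => ?_) hsum
    rw [H3term_norm _ _ _ hX.le hY0, hc]
    simp only [norm_mul, norm_pow]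
    calc ‖cN α β γ p‖ * ‖y‖ ^ p.2 * X ^ p.1 = ‖cN α β γ p‖ * X ^ p.1 * ‖y‖ ^ p.2 := by ring
      _ ≤ ‖cN α β γ p‖ * X ^ p.1 * Y ^ p.2 := by
          have h1 : ‖y‖ ^ p.2 ≤ Y ^ p.2 := pow_le_pow_left₀ (norm_nonneg y) hyY _
          have h2 : (0:ℝ) ≤ ‖cN α β γ p‖ * X ^ p.1 := by positivity
          exact mul_le_mul_of_nonneg_left h1 h2
  set r : ℝ := (‖u‖ + X)/2 with hr
  have hr0 : 0 < r := by
    have := norm_nonneg u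
    rw [hr]; linarith
  have hrX : r < X := by rw [hr]; linarith
  have hur : ‖u‖ < r := by rw [hr]; linarith
  have hd := key_hasDerivAt hr0 hrX hcsum hur
  rw [hfun]
  have hrw : (∑' p : ℕ × ℕ, c p * p.1 * u ^ (p.1 - 1))
      = α*(α+1)/γ * H3 (α+2) β (γ+1) u y := by
    rw [← tsum_shift1 (fun p => c p * p.1 * u ^ (p.1 - 1)) (fun n => by simp)]
    have : ∀ p : ℕ × ℕ, c (p.1+1, p.2) * ((p.1+1 : ℕ) : ℂ) * u ^ ((p.1+1) - 1)
        = α*(α+1)/γ * H3term (α+2) β (γ+1) u y p := by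
      intro p
      rw [H3term_eq, hc]
      simp only [Nat.add_sub_cancel]
      push_cast
      linear_combination (u ^ p.1 * y ^ p.2) * Ix α β γ hγ p.1 p.2
    calc ∑' p : ℕ × ℕ, c (p.1+1, p.2) * ((p.1+1 : ℕ) : ℂ) * u ^ ((p.1+1) - 1)
        = ∑' p : ℕ × ℕ, α*(α+1)/γ * H3term (α+2) β (γ+1) u y p := tsum_congr this
      _ = α*(α+1)/γ * H3 (α+2) β (γ+1) u y := tsum_mul_left
  rw [← hrw]
  exact hd

lemma sumX (α β γ : ℂ) (hγ : ∀ i : ℕ, γ + (i:ℂ) ≠ 0) (hα : α*(α+1) ≠ 0)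
    {X Y r : ℝ} (hr0 : 0 < r) (hrX : r < X) (hY0 : 0 ≤ Y)
    (hsum : Summable fun p => ‖H3term α β γ (X:ℂ) (Y:ℂ) p‖) :
    Summable fun p => ‖H3term (α+2) β (γ+1) (r:ℂ) (Y:ℂ) p‖ := by
  have hX : 0 < X := hr0.trans hrX
  have hg0 : γ ≠ 0 := by simpa using hγ 0
  set q : ℝ := r / X with hq
  have hq0 : 0 ≤ q := by positivity
  have hq1 : q < 1 := (div_lt_one hX).2 hrX
  have hrqX : r = q * X := by rw [hq, div_mul_cancel₀ _ hX.ne']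
  obtain ⟨C, hC0, hC⟩ := exists_geom_bound hq0 hq1
  have hsolve : ∀ m n : ℕ, cN (α+2) β (γ+1) (m, n)
      = γ/(α*(α+1)) * (cN α β γ (m+1, n) * ((m:ℂ)+1)) := by
    intro m n
    rw [Ix α β γ hγ m n, ← mul_assoc, div_mul_div_comm, mul_comm γ (α*(α+1)),
      div_self (mul_ne_zero hα hg0), one_mul]
  set K : ℝ := ‖γ/(α*(α+1))‖ with hK
  have hmain : ∀ p : ℕ × ℕ, ‖H3term (α+2) β (γ+1) (r:ℂ) (Y:ℂ) p‖
      ≤ K * C / X * ‖H3term α β γ (X:ℂ) (Y:ℂ) (p.1+1, p.2)‖ := by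
    intro p
    rw [H3term_norm _ _ _ hr0.le hY0, H3term_norm _ _ _ hX.le hY0]
    have hnorm : ‖cN (α+2) β (γ+1) p‖ = K * (‖cN α β γ (p.1+1, p.2)‖ * ((p.1:ℝ)+1)) := by
      have := hsolve p.1 p.2
      rw [show (p.1, p.2) = p from rfl] at this
      rw [this, norm_mul, norm_mul, hK]
      congr 1
      congr 1
      have : ((p.1:ℂ)+1) = (((p.1+1 : ℕ)) : ℂ) := by push_cast; ring
      rw [this, Complex.norm_natCast]
      push_cast; ring
    rw [hnorm]
    have hpow : ((p.1:ℝ)+1) * r ^ p.1 ≤ C / X * X ^ (p.1+1) := by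
      rw [hrqX, mul_pow]
      calc ((p.1:ℝ)+1) * (q ^ p.1 * X ^ p.1) = (((p.1:ℝ)+1) * q ^ p.1) * X ^ p.1 := by ring
        _ ≤ C * X ^ p.1 := mul_le_mul_of_nonneg_right (hC p.1) (by positivity)
        _ = C / X * X ^ (p.1+1) := by field_simp; ring
    calc K * (‖cN α β γ (p.1+1, p.2)‖ * ((p.1:ℝ)+1)) * r ^ p.1 * Y ^ p.2
        = (K * ‖cN α β γ (p.1+1, p.2)‖ * Y ^ p.2) * (((p.1:ℝ)+1) * r ^ p.1) := by ring
      _ ≤ (K * ‖cN α β γ (p.1+1, p.2)‖ * Y ^ p.2) * (C / X * X ^ (p.1+1)) := by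
          refine mul_le_mul_of_nonneg_left hpow ?_
          positivity
      _ = K * C / X * (‖cN α β γ (p.1+1, p.2)‖ * X ^ (p.1+1) * Y ^ p.2) := by ring
  have hinj : Function.Injective (fun p : ℕ × ℕ => (p.1+1, p.2)) := by
    intro a b h
    simp only [Prod.mk.injEq] at h
    exact Prod.ext (by omega) h.2
  have hcomp : Summable fun p : ℕ × ℕ => ‖H3term α β γ (X:ℂ) (Y:ℂ) (p.1+1, p.2)‖ :=
    hsum.comp_injective hinj
  refine Summable.of_nonneg_of_le (fun p => norm_nonneg _) hmain ?_
  simpa using hcomp.mul_left (K * C / X)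
lemma swap_tsum (f : ℕ × ℕ → ℂ) : ∑' q : ℕ × ℕ, f (q.2, q.1) = ∑' p : ℕ × ℕ, f p := by
  exact (Equiv.prodComm ℕ ℕ).tsum_eq f

lemma stepY (α β γ : ℂ) (hγ : ∀ i : ℕ, γ + (i:ℂ) ≠ 0) (x : ℂ) {X Y : ℝ} (hY : 0 < Y)
    (hxX : ‖x‖ ≤ X) (hsum : Summable fun p => ‖H3term α β γ (X:ℂ) (Y:ℂ) p‖)
    {u : ℂ} (hu : ‖u‖ < Y) :
    HasDerivAt (fun z => H3 α β γ x z) (α*β/γ * H3 (α+1) (β+1) (γ+1) x u) u := by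
  have hX0 : 0 ≤ X := le_trans (norm_nonneg x) hxX
  set c : ℕ × ℕ → ℂ := fun q => cN α β γ (q.2, q.1) * x ^ q.2 with hc
  have hfun : (fun z => H3 α β γ x z) = fun z => ∑' q : ℕ × ℕ, c q * z ^ q.1 := by
    funext z
    rw [H3, ← swap_tsum (H3term α β γ x z)]
    exact (tsum_congr fun q => by simp only [H3term_eq, hc]).symm
  have hswapsum : Summable fun q : ℕ × ℕ => ‖H3term α β γ (X:ℂ) (Y:ℂ) (q.2, q.1)‖ := by
    have hinj : Function.Injective (fun q : ℕ × ℕ => (q.2, q.1)) := by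
      intro a b h
      simp only [Prod.mk.injEq] at h
      exact Prod.ext h.2 h.1
    exact hsum.comp_injective hinj
  have hcsum : Summable fun q : ℕ × ℕ => ‖c q‖ * Y ^ q.1 := by
    refine Summable.of_nonneg_of_le (fun q => by positivity) (fun q => ?_) hswapsum
    rw [H3term_norm _ _ _ hX0 hY.le, hc]
    simp only [norm_mul, norm_pow]
    calc ‖cN α β γ (q.2, q.1)‖ * ‖x‖ ^ q.2 * Y ^ q.1
        = ‖cN α β γ (q.2, q.1)‖ * Y ^ q.1 * ‖x‖ ^ q.2 := by ring
      _ ≤ ‖cN α β γ (q.2, q.1)‖ * Y ^ q.1 * X ^ q.2 := by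
          have h1 : ‖x‖ ^ q.2 ≤ X ^ q.2 := pow_le_pow_left₀ (norm_nonneg x) hxX _
          exact mul_le_mul_of_nonneg_left h1 (by positivity)
      _ = ‖cN α β γ (q.2, q.1)‖ * X ^ q.2 * Y ^ q.1 := by ring
  set r : ℝ := (‖u‖ + Y)/2 with hr
  have hr0 : 0 < r := by have := norm_nonneg u; rw [hr]; linarith
  have hrY : r < Y := by rw [hr]; linarith
  have hur : ‖u‖ < r := by rw [hr]; linarith
  have hd := key_hasDerivAt hr0 hrY hcsum hur
  rw [hfun]
  have hrw : (∑' q : ℕ × ℕ, c q * q.1 * u ^ (q.1 - 1))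
      = α*β/γ * H3 (α+1) (β+1) (γ+1) x u := by
    rw [← tsum_shift1 (fun q => c q * q.1 * u ^ (q.1 - 1)) (fun n => by simp)]
    have : ∀ q : ℕ × ℕ, c (q.1+1, q.2) * ((q.1+1 : ℕ) : ℂ) * u ^ ((q.1+1) - 1)
        = α*β/γ * H3term (α+1) (β+1) (γ+1) x u (q.2, q.1) := by
      intro q
      rw [H3term_eq, hc]
      simp only [Nat.add_sub_cancel]
      push_cast
      linear_combination (u ^ q.1 * x ^ q.2) * Iy α β γ hγ q.2 q.1
    calc ∑' q : ℕ × ℕ, c (q.1+1, q.2) * ((q.1+1 : ℕ) : ℂ) * u ^ ((q.1+1) - 1)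
        = ∑' q : ℕ × ℕ, α*β/γ * H3term (α+1) (β+1) (γ+1) x u (q.2, q.1) := tsum_congr this
      _ = α*β/γ * ∑' q : ℕ × ℕ, H3term (α+1) (β+1) (γ+1) x u (q.2, q.1) := tsum_mul_left
      _ = α*β/γ * H3 (α+1) (β+1) (γ+1) x u := by rw [swap_tsum, H3]
  rw [← hrw]
  exact hd

lemma sumY (α β γ : ℂ) (hγ : ∀ i : ℕ, γ + (i:ℂ) ≠ 0) (hαβ : α*β ≠ 0)
    {X Y r : ℝ} (hr0 : 0 < r) (hrY : r < Y) (hX0 : 0 ≤ X)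
    (hsum : Summable fun p => ‖H3term α β γ (X:ℂ) (Y:ℂ) p‖) :
    Summable fun p => ‖H3term (α+1) (β+1) (γ+1) (X:ℂ) (r:ℂ) p‖ := by
  have hY : 0 < Y := hr0.trans hrY
  have hg0 : γ ≠ 0 := by simpa using hγ 0
  set q : ℝ := r / Y with hq
  have hq0 : 0 ≤ q := by positivity
  have hq1 : q < 1 := (div_lt_one hY).2 hrY
  have hrqY : r = q * Y := by rw [hq, div_mul_cancel₀ _ hY.ne']
  obtain ⟨C, hC0, hC⟩ := exists_geom_bound hq0 hq1
  have hsolve : ∀ m n : ℕ, cN (α+1) (β+1) (γ+1) (m, n)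
      = γ/(α*β) * (cN α β γ (m, n+1) * ((n:ℂ)+1)) := by
    intro m n
    rw [Iy α β γ hγ m n, ← mul_assoc, div_mul_div_comm, mul_comm γ (α*β),
      div_self (mul_ne_zero hαβ hg0), one_mul]
  set K : ℝ := ‖γ/(α*β)‖ with hK
  have hmain : ∀ p : ℕ × ℕ, ‖H3term (α+1) (β+1) (γ+1) (X:ℂ) (r:ℂ) p‖
      ≤ K * C / Y * ‖H3term α β γ (X:ℂ) (Y:ℂ) (p.1, p.2+1)‖ := by
    intro p
    rw [H3term_norm _ _ _ hX0 hr0.le, H3term_norm _ _ _ hX0 hY.le]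
    have hnorm : ‖cN (α+1) (β+1) (γ+1) p‖ = K * (‖cN α β γ (p.1, p.2+1)‖ * ((p.2:ℝ)+1)) := by
      have h1 := hsolve p.1 p.2
      rw [show (p.1, p.2) = p from rfl] at h1
      rw [h1, norm_mul, norm_mul, hK]
      congr 1
      congr 1
      have h2 : ((p.2:ℂ)+1) = (((p.2+1 : ℕ)) : ℂ) := by push_cast; ring
      rw [h2, Complex.norm_natCast]
      push_cast; ring
    rw [hnorm]
    have hpow : ((p.2:ℝ)+1) * r ^ p.2 ≤ C / Y * Y ^ (p.2+1) := by
      rw [hrqY, mul_pow]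
      calc ((p.2:ℝ)+1) * (q ^ p.2 * Y ^ p.2) = (((p.2:ℝ)+1) * q ^ p.2) * Y ^ p.2 := by ring
        _ ≤ C * Y ^ p.2 := mul_le_mul_of_nonneg_right (hC p.2) (by positivity)
        _ = C / Y * Y ^ (p.2+1) := by field_simp; ring
    calc K * (‖cN α β γ (p.1, p.2+1)‖ * ((p.2:ℝ)+1)) * X ^ p.1 * r ^ p.2
        = (K * ‖cN α β γ (p.1, p.2+1)‖ * X ^ p.1) * (((p.2:ℝ)+1) * r ^ p.2) := by ring
      _ ≤ (K * ‖cN α β γ (p.1, p.2+1)‖ * X ^ p.1) * (C / Y * Y ^ (p.2+1)) := by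
          exact mul_le_mul_of_nonneg_left hpow (by positivity)
      _ = K * C / Y * (‖cN α β γ (p.1, p.2+1)‖ * X ^ p.1 * Y ^ (p.2+1)) := by ring
  have hinj : Function.Injective (fun p : ℕ × ℕ => (p.1, p.2+1)) := by
    intro a b h
    simp only [Prod.mk.injEq] at h
    exact Prod.ext h.1 (by omega)
  have hcomp : Summable fun p : ℕ × ℕ => ‖H3term α β γ (X:ℂ) (Y:ℂ) (p.1, p.2+1)‖ :=
    hsum.comp_injective hinj
  refine Summable.of_nonneg_of_le (fun p => norm_nonneg _) hmain ?_
  simpa using hcomp.mul_left (K * C / Y)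
lemma iteratedDeriv_congr_nhds {f g : ℂ → ℂ} {x : ℂ} (h : f =ᶠ[nhds x] g) (n : ℕ) :
    iteratedDeriv n f x = iteratedDeriv n g x := by
  induction n generalizing f g with
  | zero => simpa [iteratedDeriv_zero] using h.eq_of_nhds
  | succ n ihn =>
    rw [iteratedDeriv_succ', iteratedDeriv_succ']
    exact ihn h.deriv

lemma iteratedDeriv_const_mul' (n : ℕ) (K : ℂ) (f : ℂ → ℂ) :
    iteratedDeriv n (fun z => K * f z) = fun z => K * iteratedDeriv n f z := by
  induction n with
  | zero => simp [iteratedDeriv_zero]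
  | succ n ihn =>
    rw [iteratedDeriv_succ, iteratedDeriv_succ, ihn]
    funext z
    exact deriv_const_mul_field K

lemma iteratedDeriv_zero_fun (n : ℕ) :
    iteratedDeriv n (fun _ : ℂ => (0:ℂ)) = fun _ => 0 := by
  induction n with
  | zero => simp [iteratedDeriv_zero]
  | succ n ihn =>
    rw [iteratedDeriv_succ, ihn]
    funext z
    simp

lemma mainX (y : ℂ) (Y : ℝ) (hyY : ‖y‖ ≤ Y) (β : ℂ) :
    ∀ s : ℕ, ∀ α γ : ℂ, (∀ i : ℕ, γ + (i:ℂ) ≠ 0) → ∀ X : ℝ, 0 < X →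
    Summable (fun p => ‖H3term α β γ (X:ℂ) (Y:ℂ) p‖) → ∀ t : ℂ, ‖t‖ < X →
    iteratedDeriv s (fun z => H3 α β γ z y) t
      = pn α (2*s) / pn γ s * H3 (α + 2*(s:ℂ)) β (γ + (s:ℂ)) t y := by
  intro s
  induction s with
  | zero =>
    intro α γ hγ X hX hsum t ht
    simp [iteratedDeriv_zero, pn]
  | succ s ih =>
    intro α γ hγ X hX hsum t ht
    have hY0 : 0 ≤ Y := le_trans (norm_nonneg y) hyY
    have heq : deriv (fun z => H3 α β γ z y)
        =ᶠ[nhds t] (fun w => α*(α+1)/γ * H3 (α+2) β (γ+1) w y) := by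
      filter_upwards [Metric.isOpen_ball.mem_nhds (mem_ball_zero_iff.2 ht)] with w hw
      exact (stepX α β γ hγ y hX hyY hsum (mem_ball_zero_iff.1 hw)).deriv
    rw [iteratedDeriv_succ', iteratedDeriv_congr_nhds heq.symm.symm]
    by_cases hα : α*(α+1) = 0
    · have hz : (fun w => α*(α+1)/γ * H3 (α+2) β (γ+1) w y) = fun _ => (0:ℂ) := by
        funext w; rw [hα]; simp
      rw [hz, iteratedDeriv_zero_fun]
      have h2 : pn α (2*(s+1)) = 0 := by
        rw [show 2*(s+1) = 2*s+1+1 from by ring, pn_succ_left, pn_succ_left, ← mul_assoc,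
          hα, zero_mul]
      rw [h2]
      simp
    · rw [iteratedDeriv_const_mul']
      beta_reduce
      set r : ℝ := (‖t‖ + X)/2 with hr
      have hr0 : 0 < r := by have := norm_nonneg t; rw [hr]; linarith
      have hrX : r < X := by rw [hr]; linarith
      have htr : ‖t‖ < r := by rw [hr]; linarith
      have hγ2 : ∀ i : ℕ, (γ+1) + (i:ℂ) ≠ 0 := by
        intro i hcon
        have h := hγ (i+1)
        push_cast at h
        exact h (by linear_combination hcon)
      have hsum2 := sumX α β γ hγ hα hr0 hrX hY0 hsum
      rw [ih (α+2) (γ+1) hγ2 r hr0 hsum2 t htr]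
      have hc1 : pn α (2*(s+1)) = α*(α+1) * pn (α+2) (2*s) := by
        rw [show 2*(s+1) = 2*s+1+1 from by ring, pn_succ_left, pn_succ_left,
          show α+1+1 = α+2 from by ring]
        ring
      have hc2 : pn γ (s+1) = γ * pn (γ+1) s := pn_succ_left γ s
      rw [hc1, hc2, ← mul_assoc, div_mul_div_comm]
      have ha : α + 2 + 2*(s:ℂ) = α + 2*(((s+1:ℕ)):ℂ) := by push_cast; ring
      have hb : γ + 1 + (s:ℂ) = γ + (((s+1:ℕ)):ℂ) := by push_cast; ring
      rw [ha, hb]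

lemma mainY (x : ℂ) (X : ℝ) (hxX : ‖x‖ ≤ X) :
    ∀ s : ℕ, ∀ α β γ : ℂ, (∀ i : ℕ, γ + (i:ℂ) ≠ 0) → ∀ Y : ℝ, 0 < Y →
    Summable (fun p => ‖H3term α β γ (X:ℂ) (Y:ℂ) p‖) → ∀ t : ℂ, ‖t‖ < Y →
    iteratedDeriv s (fun z => H3 α β γ x z) t
      = pn α s * pn β s / pn γ s * H3 (α + (s:ℂ)) (β + (s:ℂ)) (γ + (s:ℂ)) x t := by
  intro s
  induction s with
  | zero =>
    intro α β γ hγ Y hY hsum t ht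
    simp [iteratedDeriv_zero, pn]
  | succ s ih =>
    intro α β γ hγ Y hY hsum t ht
    have hX0 : 0 ≤ X := le_trans (norm_nonneg x) hxX
    have heq : deriv (fun z => H3 α β γ x z)
        =ᶠ[nhds t] (fun w => α*β/γ * H3 (α+1) (β+1) (γ+1) x w) := by
      filter_upwards [Metric.isOpen_ball.mem_nhds (mem_ball_zero_iff.2 ht)] with w hw
      exact (stepY α β γ hγ x hY hxX hsum (mem_ball_zero_iff.1 hw)).deriv
    rw [iteratedDeriv_succ', iteratedDeriv_congr_nhds heq]
    by_cases hαβ : α*β = 0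
    · have hz : (fun w => α*β/γ * H3 (α+1) (β+1) (γ+1) x w) = fun _ => (0:ℂ) := by
        funext w; rw [hαβ]; simp
      rw [hz, iteratedDeriv_zero_fun]
      have h2 : pn α (s+1) * pn β (s+1) = 0 := by
        rw [pn_succ_left, pn_succ_left]
        rcases mul_eq_zero.1 hαβ with h | h
        · rw [h]; ring
        · rw [h]; ring
      rw [show pn α (s+1) * pn β (s+1) / pn γ (s+1) = (pn α (s+1) * pn β (s+1)) / pn γ (s+1)
        from rfl, h2]
      simp
    · rw [iteratedDeriv_const_mul']
      beta_reduce
      set r : ℝ := (‖t‖ + Y)/2 with hr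
      have hr0 : 0 < r := by have := norm_nonneg t; rw [hr]; linarith
      have hrY : r < Y := by rw [hr]; linarith
      have htr : ‖t‖ < r := by rw [hr]; linarith
      have hγ2 : ∀ i : ℕ, (γ+1) + (i:ℂ) ≠ 0 := by
        intro i hcon
        have h := hγ (i+1)
        push_cast at h
        exact h (by linear_combination hcon)
      have hsum2 := sumY α β γ hγ hαβ hr0 hrY hX0 hsum
      rw [ih (α+1) (β+1) (γ+1) hγ2 r hr0 hsum2 t htr]
      have hc1 : pn α (s+1) = α * pn (α+1) s := pn_succ_left α s
      have hc2 : pn β (s+1) = β * pn (β+1) s := pn_succ_left β s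
      have hc3 : pn γ (s+1) = γ * pn (γ+1) s := pn_succ_left γ s
      rw [hc1, hc2, hc3, ← mul_assoc, div_mul_div_comm]
      have ha : α + 1 + (s:ℂ) = α + (((s+1:ℕ)):ℂ) := by push_cast; ring
      have hb : β + 1 + (s:ℂ) = β + (((s+1:ℕ)):ℂ) := by push_cast; ring
      have hc : γ + 1 + (s:ℂ) = γ + (((s+1:ℕ)):ℂ) := by push_cast; ring
      rw [ha, hb, hc]
      congr 1
      ring

/-- Derivative formulas for `H3` in `x` and in `y` (paper Eq. (3.22)). -/
theorem H3_deriv (s : ℕ) (α β γ x y : ℂ)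
    (hγ : ∀ n : ℕ, γ ≠ -(n : ℂ))
    (hint : ∃ X Y : ℝ, ‖x‖ < X ∧ ‖y‖ < Y ∧
      Summable fun p : ℕ × ℕ => ‖H3term α β γ (X : ℂ) (Y : ℂ) p‖) :
    iteratedDeriv s (fun t => H3 α β γ t y) x =
        poch α (2 * s : ℤ) / poch γ (s : ℤ) *
          H3 (α + 2 * (s : ℂ)) β (γ + (s : ℂ)) x y ∧
    iteratedDeriv s (fun t => H3 α β γ x t) y =
        poch α (s : ℤ) * poch β (s : ℤ) / poch γ (s : ℤ) *
          H3 (α + (s : ℂ)) (β + (s : ℂ)) (γ + (s : ℂ)) x y := by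
  obtain ⟨X, Y, hxX, hyY, hsum⟩ := hint
  have hγ' : ∀ i : ℕ, γ + (i:ℂ) ≠ 0 := by
    intro i hcon
    exact hγ i (by linear_combination hcon)
  have hX0 : 0 < X := lt_of_le_of_lt (norm_nonneg x) hxX
  have hY0 : 0 < Y := lt_of_le_of_lt (norm_nonneg y) hyY
  have e1 : poch α (2 * s : ℤ) = pn α (2*s) := by
    rw [show (2 * (s:ℤ)) = ((2*s : ℕ) : ℤ) from by push_cast; ring, poch_nat_s13]
  have e2 : poch γ (s : ℤ) = pn γ s := poch_nat_s13 γ s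
  have e3 : poch α (s : ℤ) = pn α s := poch_nat_s13 α s
  have e4 : poch β (s : ℤ) = pn β s := poch_nat_s13 β s
  constructor
  · rw [e1, e2]
    exact mainX y Y hyY.le β s α γ hγ' X hX0 hsum x hxX
  · rw [e3, e4, e2]
    exact mainY x X hxX.le s α β γ hγ' Y hY0 hsum y hyY

end
end

section
/- For complex t with |t| < 1 and complex x, y such that the double series for H3(α,β;γ; x/(1−t)², y/(1−t)) converges absolutely and the triple series below converges absolutely, the following generating relation holds: Σ_{r=0}^∞ [(α)_r / r!] · H3(α+r, β; γ; x, y) · t^r = (1−t)^{−α} · H3(α, β; γ; x/(1−t)², y/(1−t)). -/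
noncomputable section

open Finset

def pc (μ : ℂ) (k : ℕ) : ℂ := ∏ i ∈ Finset.range k, (μ + (i : ℂ))

lemma pc_succ (μ : ℂ) (k : ℕ) : pc μ (k + 1) = pc μ k * (μ + k) :=
  Finset.prod_range_succ _ _

lemma pc_succ' (μ : ℂ) (k : ℕ) : pc μ (k + 1) = μ * pc (μ + 1) k := by
  rw [pc, Finset.prod_range_succ', pc]
  push_cast
  rw [add_zero, mul_comm]
  congr 1
  exact Finset.prod_congr rfl fun i _ => by ring

lemma pc_add (μ : ℂ) (a b : ℕ) : pc μ (a + b) = pc μ a * pc (μ + a) b := by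
  rw [pc, Finset.prod_range_add]
  congr 1
  apply Finset.prod_congr rfl; intro i _; push_cast; ring

lemma summable_pc_norm (α : ℂ) {r : ℝ} (h0 : 0 ≤ r) (hr : r < 1) :
    Summable (fun n : ℕ => ‖pc α n / (n.factorial : ℂ)‖ * r ^ n) := by
  have hρ1 : (1 + r) / 2 < 1 := by linarith
  apply summable_of_ratio_norm_eventually_le hρ1
  rw [Filter.eventually_atTop]
  refine ⟨⌈2 * ‖α‖ / (1 - r)⌉₊, fun n hn => ?_⟩
  have hn' : 2 * ‖α‖ / (1 - r) ≤ n := le_trans (Nat.le_ceil _) (by exact_mod_cast hn)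
  have h1r : (0 : ℝ) < 1 - r := by linarith
  have hα : 2 * ‖α‖ ≤ n * (1 - r) := by rw [div_le_iff₀ h1r] at hn'; nlinarith
  have hfn : (0:ℝ) ≤ ‖pc α n / (n.factorial : ℂ)‖ * r ^ n := by positivity
  have hfn1 : (0:ℝ) ≤ ‖pc α (n+1) / ((n+1).factorial : ℂ)‖ * r ^ (n+1) := by positivity
  rw [Real.norm_of_nonneg hfn1, Real.norm_of_nonneg hfn]
  have hkey : pc α (n+1) / ((n+1).factorial : ℂ) = (pc α n / (n.factorial : ℂ)) * ((α + n) / (n+1)) := by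
    rw [pc_succ, Nat.factorial_succ]
    push_cast
    have h1 : ((n : ℂ) + 1) ≠ 0 := by
      exact_mod_cast Nat.cast_add_one_ne_zero (R := ℂ) n
    have h2 : ((n.factorial : ℂ)) ≠ 0 := Nat.cast_ne_zero.2 (Nat.factorial_ne_zero n)
    rw [div_mul_div_comm]
    rw [mul_comm ((n.factorial : ℂ)) (((n:ℂ) + 1))]
  rw [hkey, norm_mul, pow_succ]
  have hbound : ‖(α + n) / ((n : ℂ) + 1)‖ * r ≤ (1 + r) / 2 := by
    rw [norm_div]
    have h1 : ‖(α + (n : ℂ))‖ ≤ ‖α‖ + n := by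
      calc ‖α + (n:ℂ)‖ ≤ ‖α‖ + ‖(n:ℂ)‖ := norm_add_le _ _
        _ = ‖α‖ + n := by rw [Complex.norm_natCast]
    have h2 : ‖((n : ℂ) + 1)‖ = (n : ℝ) + 1 := by
      rw [show ((n:ℂ) + 1) = (((n+1 : ℕ)):ℂ) by push_cast; ring, Complex.norm_natCast]
      push_cast; ring
    rw [h2, div_mul_eq_mul_div, div_le_iff₀ (by positivity)]
    have h3 : ‖α‖ * r ≤ ‖α‖ := by nlinarith [norm_nonneg α]
    nlinarith [norm_nonneg α, mul_le_mul_of_nonneg_right h1 h0]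
  calc ‖pc α n / (n.factorial:ℂ)‖ * ‖(α + n) / ((n:ℂ)+1)‖ * (r ^ n * r)
      = (‖(α + n) / ((n:ℂ)+1)‖ * r) * (‖pc α n / (n.factorial:ℂ)‖ * r ^ n) := by ring
    _ ≤ ((1+r)/2) * (‖pc α n / (n.factorial:ℂ)‖ * r ^ n) :=
        mul_le_mul_of_nonneg_right hbound hfn

lemma summable_pc (α z : ℂ) (hz : ‖z‖ < 1) :
    Summable (fun n : ℕ => pc α n / (n.factorial : ℂ) * z ^ n) := by
  apply Summable.of_norm
  simpa [norm_mul, norm_pow] using summable_pc_norm α (norm_nonneg z) hz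

lemma hasSum_binom (α t : ℂ) (ht : ‖t‖ < 1) :
    HasSum (fun r : ℕ => pc α r / (r.factorial : ℂ) * t ^ r) ((1 - t) ^ (-α)) := by
  set c : ℕ → ℂ := fun n => pc α n / (n.factorial : ℂ) with hcdef
  set f : ℂ → ℂ := fun z => ∑' n : ℕ, c n * z ^ n with hfdef
  set D : ℂ → ℂ := fun z => ∑' n : ℕ, c n * ((n : ℂ) * z ^ (n - 1)) with hDdef
  have hrec : ∀ n : ℕ, c (n + 1) * ((n : ℂ) + 1) = (α + n) * c n := by
    intro n
    have h1 : ((n : ℂ) + 1) ≠ 0 := by exact_mod_cast Nat.cast_add_one_ne_zero (R := ℂ) n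
    have h2 : ((n.factorial : ℂ)) ≠ 0 := Nat.cast_ne_zero.2 (Nat.factorial_ne_zero n)
    simp only [hcdef]
    rw [pc_succ, Nat.factorial_succ]
    push_cast
    field_simp
  -- summable bound on derivatives on balls
  have hubd : ∀ R : ℝ, 0 < R → R < 1 →
      Summable (fun n : ℕ => ‖c n‖ * ((n : ℝ) * R ^ (n - 1))) := by
    intro R hR0 hR1
    apply (summable_nat_add_iff 1).mp
    have he : ∀ n : ℕ, ‖c (n + 1)‖ * (((n + 1 : ℕ) : ℝ) * R ^ (n + 1 - 1)) =
        ‖α‖ * (‖pc (α + 1) n / (n.factorial : ℂ)‖ * R ^ n) := by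
      intro n
      have h1 : ((n : ℂ) + 1) ≠ 0 := by exact_mod_cast Nat.cast_add_one_ne_zero (R := ℂ) n
      have h2 : ((n.factorial : ℂ)) ≠ 0 := Nat.cast_ne_zero.2 (Nat.factorial_ne_zero n)
      have hcc : c (n + 1) * ((n : ℂ) + 1) = α * (pc (α + 1) n / (n.factorial : ℂ)) := by
        simp only [hcdef]
        rw [pc_succ', Nat.factorial_succ]
        push_cast
        field_simp
      have hnorm := congrArg norm hcc
      rw [norm_mul, norm_mul] at hnorm
      have hn1 : ‖((n : ℂ) + 1)‖ = ((n + 1 : ℕ) : ℝ) := by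
        rw [show ((n : ℂ) + 1) = (((n + 1 : ℕ)) : ℂ) by push_cast; ring, Complex.norm_natCast]
      rw [hn1] at hnorm
      rw [show n + 1 - 1 = n from rfl]
      calc ‖c (n + 1)‖ * (((n + 1 : ℕ) : ℝ) * R ^ n)
          = (‖c (n + 1)‖ * ((n + 1 : ℕ) : ℝ)) * R ^ n := by ring
        _ = (‖α‖ * ‖pc (α + 1) n / (n.factorial : ℂ)‖) * R ^ n := by rw [hnorm]
        _ = ‖α‖ * (‖pc (α + 1) n / (n.factorial : ℂ)‖ * R ^ n) := by ring
    simp only [he]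
    exact (summable_pc_norm (α + 1) hR0.le hR1).mul_left _
  have hbd : ∀ R : ℝ, ∀ (n : ℕ) (w : ℂ), ‖w‖ ≤ R →
      ‖c n * ((n : ℂ) * w ^ (n - 1))‖ ≤ ‖c n‖ * ((n : ℝ) * R ^ (n - 1)) := by
    intro R n w hw
    rw [norm_mul, norm_mul, norm_pow, Complex.norm_natCast]
    exact mul_le_mul_of_nonneg_left
      (mul_le_mul_of_nonneg_left (pow_le_pow_left₀ (norm_nonneg w) hw _) (Nat.cast_nonneg n))
      (norm_nonneg _)
  -- derivative of f at any point of the unit ball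
  have hderiv : ∀ z : ℂ, ‖z‖ < 1 → HasDerivAt f (D z) z := by
    intro z hz
    set R : ℝ := (‖z‖ + 1) / 2 with hRdef
    have hR0 : 0 < R := by positivity
    have hzR : ‖z‖ < R := by rw [hRdef]; linarith [norm_nonneg z]
    have hR1 : R < 1 := by rw [hRdef]; linarith
    have hz' : z ∈ Metric.ball (0 : ℂ) R := by rwa [Metric.mem_ball, dist_zero_right]
    exact hasDerivAt_tsum_of_isPreconnected (hubd R hR0 hR1) Metric.isOpen_ball
      (convex_ball (0 : ℂ) R).isPreconnected
      (fun n w _ => (hasDerivAt_pow n w).const_mul (c n))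
      (fun n w hw => hbd R n w (by rw [Metric.mem_ball, dist_zero_right] at hw; exact hw.le))
      (Metric.mem_ball_self hR0) (summable_pc α 0 (by simp)) hz'
  -- the ODE
  have hODE : ∀ z : ℂ, ‖z‖ < 1 → (1 - z) * D z = α * f z := by
    intro z hz
    have hs1 : Summable (fun n : ℕ => c n * z ^ n) := summable_pc α z hz
    have hsD : Summable (fun n : ℕ => c n * ((n : ℂ) * z ^ (n - 1))) := by
      set R : ℝ := (‖z‖ + 1) / 2 with hRdef
      have hR0 : 0 < R := by positivity
      have hzR : ‖z‖ < R := by rw [hRdef]; linarith [norm_nonneg z]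
      have hR1 : R < 1 := by rw [hRdef]; linarith
      exact Summable.of_norm_bounded (hubd R hR0 hR1) (fun n => hbd R n z hzR.le)
    have hterm : ∀ n : ℕ, c (n + 1) * (((n + 1 : ℕ) : ℂ) * z ^ (n + 1 - 1)) =
        α * (c n * z ^ n) + z * (c n * ((n : ℂ) * z ^ (n - 1))) := by
      intro n
      have h1 : c (n + 1) * (((n + 1 : ℕ) : ℂ) * z ^ (n + 1 - 1)) =
          ((α + n) * c n) * z ^ n := by
        rw [show ((n + 1 : ℕ) : ℂ) = (n : ℂ) + 1 by push_cast; ring,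
          show n + 1 - 1 = n from rfl]
        calc c (n + 1) * (((n : ℂ) + 1) * z ^ n)
            = (c (n + 1) * ((n : ℂ) + 1)) * z ^ n := by ring
          _ = ((α + n) * c n) * z ^ n := by rw [hrec n]
      rw [h1]
      cases n with
      | zero => simp
      | succ m =>
        rw [show m + 1 - 1 = m from rfl]
        push_cast
        ring
    have h0 : D z = ∑' n : ℕ, c (n + 1) * (((n + 1 : ℕ) : ℂ) * z ^ (n + 1 - 1)) := by
      have hDz : D z = ∑' n : ℕ, c n * ((n : ℂ) * z ^ (n - 1)) := rfl
      rw [hDz, Summable.tsum_eq_zero_add hsD]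
      simp
    have hcalc : (∑' n : ℕ, c (n + 1) * (((n + 1 : ℕ) : ℂ) * z ^ (n + 1 - 1)))
        = α * f z + z * D z := by
      rw [tsum_congr hterm, Summable.tsum_add (hs1.mul_left α) (hsD.mul_left z),
        tsum_mul_left, tsum_mul_left]
    have hshift := h0.trans hcalc
    linear_combination hshift
  -- the auxiliary function is constant on the unit ball
  set F : ℂ → ℂ := fun z => f z * (1 - z) ^ α with hFdef
  have hFD : ∀ z ∈ Metric.ball (0 : ℂ) 1, HasDerivAt F 0 z := by
    intro z hz
    rw [Metric.mem_ball, dist_zero_right] at hz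
    have h1z : (1 : ℂ) - z ≠ 0 := by
      intro h
      have hz1 : z = 1 := by linear_combination -h
      rw [hz1] at hz; simp at hz
    have hsp : (1 : ℂ) - z ∈ Complex.slitPlane := by
      rw [Complex.mem_slitPlane_iff]
      left
      have hre : z.re ≤ ‖z‖ := by
        exact Complex.re_le_norm z
      simp only [Complex.sub_re, Complex.one_re]
      linarith
    have hpow : HasDerivAt (fun w : ℂ => (1 - w) ^ α) (α * (1 - z) ^ (α - 1) * (-1)) z :=
      HasDerivAt.cpow_const ((hasDerivAt_id z).const_sub 1) hsp
    have hF : HasDerivAt F (D z * (1 - z) ^ α + f z * (α * (1 - z) ^ (α - 1) * (-1))) z :=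
      (hderiv z hz).mul hpow
    have hcp : (1 - z) ^ α = (1 - z) ^ (α - 1) * (1 - z) := by
      conv_lhs => rw [show α = (α - 1) + 1 by ring]
      rw [Complex.cpow_add _ _ h1z, Complex.cpow_one]
    have hval : D z * (1 - z) ^ α + f z * (α * (1 - z) ^ (α - 1) * (-1)) = 0 := by
      rw [hcp]
      linear_combination (1 - z) ^ (α - 1) * hODE z hz
    exact hval ▸ hF
  have hconst : F t = F 0 := by
    apply (convex_ball (0 : ℂ) 1).is_const_of_fderivWithin_eq_zero
      (fun z hz => ((hFD z hz).differentiableAt).differentiableWithinAt)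
      (fun z hz => ?_) (by rwa [Metric.mem_ball, dist_zero_right]) (Metric.mem_ball_self one_pos)
    rw [fderivWithin_of_isOpen Metric.isOpen_ball hz, (hFD z hz).hasFDerivAt.fderiv]
    refine ContinuousLinearMap.ext fun w => ?_
    simp
  have hF0 : F 0 = 1 := by
    have h : F 0 = (∑' n : ℕ, c n * (0 : ℂ) ^ n) * ((1 - 0 : ℂ)) ^ α := rfl
    rw [h, tsum_eq_single 0 (fun n hn => by simp [zero_pow hn])]
    simp [hcdef, pc]
  have h1t : (1 : ℂ) - t ≠ 0 := by
    intro h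
    have ht1 : t = 1 := by linear_combination -h
    rw [ht1] at ht; simp at ht
  have hft : f t = (1 - t) ^ (-α) := by
    have hne : (1 - t) ^ α ≠ 0 := by
      rw [Ne, Complex.cpow_eq_zero_iff]
      tauto
    have h2 : f t * (1 - t) ^ α = 1 := by
      rw [show f t * (1 - t) ^ α = F t from rfl, hconst, hF0]
    rw [Complex.cpow_neg]
    field_simp at h2 ⊢
    linear_combination h2
  have hhs := (summable_pc α t ht).hasSum
  have hfc : (∑' b : ℕ, pc α b / (b.factorial : ℂ) * t ^ b) = f t := rfl
  rwa [hfc, hft] at hhs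

lemma poch_natCast (μ : ℂ) (k : ℕ) : poch μ (k : ℤ) = pc μ k := by
  simp [poch, pc]

lemma poch_two_mul_add (μ : ℂ) (m n : ℕ) :
    poch μ (2 * (m : ℤ) + (n : ℤ)) = pc μ (2 * m + n) := by
  rw [show 2 * (m : ℤ) + (n : ℤ) = ((2 * m + n : ℕ) : ℤ) by push_cast; ring, poch_natCast]

lemma poch_add_nat (μ : ℂ) (m n : ℕ) :
    poch μ ((m : ℤ) + (n : ℤ)) = pc μ (m + n) := by
  rw [show (m : ℤ) + (n : ℤ) = ((m + n : ℕ) : ℤ) by push_cast; ring, poch_natCast]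

lemma pc_ne_zero (γ : ℂ) (hγ : ∀ n : ℕ, γ ≠ -(n : ℂ)) (k : ℕ) : pc γ k ≠ 0 := by
  refine Finset.prod_ne_zero_iff.2 fun i _ h => hγ i (by linear_combination h)

lemma H3_inner (α β γ x y t : ℂ) (hγ : ∀ n : ℕ, γ ≠ -(n : ℂ)) (ht : ‖t‖ < 1) (p : ℕ × ℕ) :
    ∑' r : ℕ, poch α (r : ℤ) / (r.factorial : ℂ) * H3term (α + (r : ℂ)) β γ x y p * t ^ r
      = (1 - t) ^ (-α) * H3term α β γ (x / (1 - t) ^ 2) (y / (1 - t)) p := by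
  obtain ⟨m, n⟩ := p
  have h1t : (1 : ℂ) - t ≠ 0 := by
    intro h
    have ht1 : t = 1 := by linear_combination -h
    rw [ht1] at ht; simp at ht
  have hterm : ∀ r : ℕ, poch α (r : ℤ) / (r.factorial : ℂ) * H3term (α + (r : ℂ)) β γ x y (m, n) * t ^ r
      = (pc α (2 * m + n) * pc β n / (pc γ (m + n) * (m.factorial : ℂ) * (n.factorial : ℂ))
          * x ^ m * y ^ n) * (pc (α + ((2 * m + n : ℕ) : ℂ)) r / (r.factorial : ℂ) * t ^ r) := by
    intro r
    simp only [H3term, poch_two_mul_add, poch_add_nat, poch_natCast]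
    have hk : pc α r * pc (α + (r : ℂ)) (2 * m + n)
        = pc α (2 * m + n) * pc (α + ((2 * m + n : ℕ) : ℂ)) r := by
      rw [← pc_add, ← pc_add, add_comm]
    linear_combination (pc β n / (pc γ (m + n) * (m.factorial : ℂ) * (n.factorial : ℂ))
      * x ^ m * y ^ n * t ^ r / (r.factorial : ℂ)) * hk
  rw [tsum_congr hterm, tsum_mul_left,
    (hasSum_binom (α + ((2 * m + n : ℕ) : ℂ)) t ht).tsum_eq]
  have hsplit : (1 - t) ^ (-(α + ((2 * m + n : ℕ) : ℂ)))
      = (1 - t) ^ (-α) * ((1 - t) ^ (2 * m + n))⁻¹ := by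
    rw [show -(α + ((2 * m + n : ℕ) : ℂ)) = -α + -(((2 * m + n : ℕ) : ℂ)) by ring,
      Complex.cpow_add _ _ h1t]
    congr 1
    rw [Complex.cpow_neg, Complex.cpow_natCast]
  rw [hsplit]
  simp only [H3term, poch_two_mul_add, poch_add_nat, poch_natCast]
  have hmf : ((m.factorial : ℂ)) ≠ 0 := Nat.cast_ne_zero.2 (Nat.factorial_ne_zero m)
  have hnf : ((n.factorial : ℂ)) ≠ 0 := Nat.cast_ne_zero.2 (Nat.factorial_ne_zero n)
  have hγ' : pc γ (m + n) ≠ 0 := pc_ne_zero γ hγ (m + n)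
  have hmf : True := trivial
  set u : ℂ := 1 - t with hu
  set v : ℂ := u ^ (-α) with hv
  rw [div_pow, div_pow, ← pow_mul, pow_add, mul_inv]
  ring

/-- Infinite summation (generating relation) for `H3` in the parameter `α`
(paper Eq. (5.5), first formula). -/
theorem H3_infinite_sum_alpha (α β γ x y t : ℂ)
    (hγ : ∀ n : ℕ, γ ≠ -(n : ℂ))
    (ht : ‖t‖ < 1)
    (h2 : Summable fun p : ℕ × ℕ =>
      ‖H3term α β γ (x / (1 - t) ^ 2) (y / (1 - t)) p‖)
    (h3 : Summable fun q : ℕ × ℕ × ℕ =>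
      ‖poch α (q.1 : ℤ) / (q.1.factorial : ℂ) *
          H3term (α + (q.1 : ℂ)) β γ x y q.2 * t ^ q.1‖) :
    ∑' r : ℕ, poch α (r : ℤ) / (r.factorial : ℂ) * H3 (α + (r : ℂ)) β γ x y * t ^ r =
      (1 - t) ^ (-α) * H3 α β γ (x / (1 - t) ^ 2) (y / (1 - t)) := by

  have hF : Summable (fun q : ℕ × ℕ × ℕ =>
      poch α (q.1 : ℤ) / (q.1.factorial : ℂ) * H3term (α + (q.1 : ℂ)) β γ x y q.2 * t ^ q.1) :=
    Summable.of_norm h3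
  have hG : Summable (fun q : (ℕ × ℕ) × ℕ =>
      poch α (q.2 : ℤ) / (q.2.factorial : ℂ) * H3term (α + (q.2 : ℂ)) β γ x y q.1 * t ^ q.2) :=
    (Equiv.prodComm (ℕ × ℕ) ℕ).summable_iff.2 hF
  have hstep1 : ∀ r : ℕ,
      poch α (r : ℤ) / (r.factorial : ℂ) * H3 (α + (r : ℂ)) β γ x y * t ^ r
        = ∑' p : ℕ × ℕ, poch α (r : ℤ) / (r.factorial : ℂ)
            * H3term (α + (r : ℂ)) β γ x y p * t ^ r := by
    intro r
    rw [H3, ← tsum_mul_left, ← tsum_mul_right]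
  calc ∑' r : ℕ, poch α (r : ℤ) / (r.factorial : ℂ) * H3 (α + (r : ℂ)) β γ x y * t ^ r
      = ∑' (r : ℕ) (p : ℕ × ℕ), poch α (r : ℤ) / (r.factorial : ℂ)
          * H3term (α + (r : ℂ)) β γ x y p * t ^ r := tsum_congr hstep1
    _ = ∑' q : ℕ × ℕ × ℕ, poch α (q.1 : ℤ) / (q.1.factorial : ℂ)
          * H3term (α + (q.1 : ℂ)) β γ x y q.2 * t ^ q.1 :=
        (Summable.tsum_prod' hF fun r => hF.prod_factor r).symm
    _ = ∑' q : (ℕ × ℕ) × ℕ, poch α (q.2 : ℤ) / (q.2.factorial : ℂ)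
          * H3term (α + (q.2 : ℂ)) β γ x y q.1 * t ^ q.2 :=
        ((Equiv.prodComm (ℕ × ℕ) ℕ).tsum_eq _).symm
    _ = ∑' (p : ℕ × ℕ) (r : ℕ), poch α (r : ℤ) / (r.factorial : ℂ)
          * H3term (α + (r : ℂ)) β γ x y p * t ^ r :=
        Summable.tsum_prod' hG fun p => hG.prod_factor p
    _ = ∑' p : ℕ × ℕ, (1 - t) ^ (-α) * H3term α β γ (x / (1 - t) ^ 2) (y / (1 - t)) p :=
        tsum_congr fun p => H3_inner α β γ x y t hγ ht p
    _ = (1 - t) ^ (-α) * H3 α β γ (x / (1 - t) ^ 2) (y / (1 - t)) := by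
        rw [tsum_mul_left, H3]


end
end
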